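/- The function I(Q) = \log Q + \sum_{d\ge 1} Q^d (3d)!/(d(d!)^3) satisfies the Picard-Fuchs equation (\theta^3 - 3Q\,\theta(3\theta+1)(3\theta+2)) I = 0, where \theta = Q\, d/dQ, for 0 < |Q| < 1/27 (on a branch of the logarithm). -/

import Mathlib

/-!
Write `S_k(Q) = ∑_{d ≥ 0} (d+1)^k c_d Q^(d+1)` with `c_d = (3d+3)! / ((d+1) ((d+1)!)^3)`,
so that `I = log + S_0`. The bound `(3n)! ≤ 27^n (n!)^3` gives `|c_d| ≤ 27^(d+1)`, so every
`S_k` converges on `|Q| < 1/27` and may be differentiated termwise: `θ S_k = S_(k+1)`. On the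
slit plane `θ log = 1`, hence `θI = 1 + S_1`, `θ²I = S_2`, `θ³I = S_3`, and the equation becomes
`S_3 = 6Q + 27Q S_3 + 27Q S_2 + 6Q S_1`, which is the recursion
`(d+2)^3 c_(d+1) = 3(d+1)(3d+4)(3d+5) c_d` read off coefficientwise.

On the negative real axis `Complex.log` is discontinuous, so `deriv I = 0` there by convention.
Then `θI`, `θ²I`, `θ³I` all vanish on the negative real segment, because a complex derivative
at a real point is also the derivative along the real line, and the equation holds trivially.
-/

open Complex Filter Topology
open scoped Nat

lemma summable_succ_pow_mul_geometric (k : ℕ) {q : ℝ} (hq0 : 0 < q) (hq : q < 1) :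
    Summable fun d : ℕ => ((d : ℝ) + 1) ^ k * q ^ d := by
  have h := summable_pow_mul_geometric_of_norm_lt_one (R := ℝ) k
    (by rwa [Real.norm_eq_abs, abs_of_pos hq0])
  refine (((summable_nat_add_iff 1).2 h).mul_left q⁻¹).congr fun d => ?_
  push_cast; field_simp; ring

section PowerSeries

variable {a : ℕ → ℂ} {C R : ℝ} {k : ℕ}

lemma norm_mul_pow_le (ha : ∀ d, ‖a d‖ * R ^ d ≤ C * ((d : ℝ) + 1) ^ k) (hR : 0 < R)
    {r : ℝ} {y : ℂ} (hy : ‖y‖ ≤ r) (d : ℕ) :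
    ‖a d * y ^ d‖ ≤ C * (((d : ℝ) + 1) ^ k * (r / R) ^ d) := by
  have hr : 0 ≤ r := (norm_nonneg y).trans hy
  calc ‖a d * y ^ d‖ ≤ ‖a d‖ * r ^ d := by
        rw [norm_mul, norm_pow]; gcongr
    _ = ‖a d‖ * R ^ d * (r / R) ^ d := by rw [div_pow]; field_simp
    _ ≤ C * ((d : ℝ) + 1) ^ k * (r / R) ^ d := mul_le_mul_of_nonneg_right (ha d) (by positivity)
    _ = C * (((d : ℝ) + 1) ^ k * (r / R) ^ d) := by ring

lemma summable_mul_pow (ha : ∀ d, ‖a d‖ * R ^ d ≤ C * ((d : ℝ) + 1) ^ k) {z : ℂ}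
    (hz : ‖z‖ < R) : Summable fun d => a d * z ^ d := by
  obtain ⟨r, hzr, hrR⟩ := exists_between hz
  have hr : 0 < r := (norm_nonneg z).trans_lt hzr
  have hR : 0 < R := hr.trans hrR
  exact .of_norm_bounded
    ((summable_succ_pow_mul_geometric k (div_pos hr hR) ((div_lt_one hR).2 hrR)).mul_left C)
    (norm_mul_pow_le ha hR hzr.le)

lemma summable_mul_pow_succ (ha : ∀ d, ‖a d‖ * R ^ d ≤ C * ((d : ℝ) + 1) ^ k) {z : ℂ}
    (hz : ‖z‖ < R) : Summable fun d => a d * z ^ (d + 1) := by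
  simpa only [pow_succ, mul_assoc] using (summable_mul_pow ha hz).mul_right z

lemma hasDerivAt_tsum_mul_pow_succ (ha : ∀ d, ‖a d‖ * R ^ d ≤ C * ((d : ℝ) + 1) ^ k)
    {z : ℂ} (hz : ‖z‖ < R) :
    HasDerivAt (fun Q => ∑' d : ℕ, a d * Q ^ (d + 1))
      (∑' d : ℕ, ((d : ℂ) + 1) * a d * z ^ d) z := by
  obtain ⟨r, hzr, hrR⟩ := exists_between hz
  have hr : 0 < r := (norm_nonneg z).trans_lt hzr
  have hR : 0 < R := hr.trans hrR
  refine hasDerivAt_tsum_of_isPreconnected (g := fun d Q => a d * Q ^ (d + 1))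
    (g' := fun d Q => ((d : ℂ) + 1) * a d * Q ^ d)
    ((summable_succ_pow_mul_geometric (k + 1) (div_pos hr hR) ((div_lt_one hR).2 hrR)).mul_left C)
    Metric.isOpen_ball (convex_ball 0 r).isPreconnected (fun d y _ => ?_) (fun d y hy => ?_)
    (Metric.mem_ball_self hr) (by simp) (mem_ball_zero_iff.2 hzr)
  · have h := (hasDerivAt_pow (d + 1) y).const_mul (a d)
    rw [Nat.add_sub_cancel] at h
    exact h.congr_deriv (by push_cast; ring)
  · calc ‖((d : ℂ) + 1) * a d * y ^ d‖ = ((d : ℝ) + 1) * ‖a d * y ^ d‖ := by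
          rw [mul_assoc, norm_mul]; norm_cast
      _ ≤ ((d : ℝ) + 1) * (C * (((d : ℝ) + 1) ^ k * (r / R) ^ d)) := by
          gcongr; exact norm_mul_pow_le ha hR (mem_ball_zero_iff.1 hy).le d
      _ = C * (((d : ℝ) + 1) ^ (k + 1) * (r / R) ^ d) := by ring

lemma mul_deriv_tsum_mul_pow_succ (ha : ∀ d, ‖a d‖ * R ^ d ≤ C * ((d : ℝ) + 1) ^ k) {z : ℂ}
    (hz : ‖z‖ < R) :
    z * deriv (fun Q => ∑' d : ℕ, a d * Q ^ (d + 1)) z =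
      ∑' d : ℕ, ((d : ℂ) + 1) * a d * z ^ (d + 1) := by
  rw [(hasDerivAt_tsum_mul_pow_succ ha hz).deriv, ← tsum_mul_left]
  exact tsum_congr fun d => by ring

lemma tsum_mul_pow_succ_eq {z : ℂ} (hs : Summable fun d => a d * z ^ (d + 1)) :
    ∑' d, a d * z ^ (d + 1) = a 0 * z + z * ∑' d, a (d + 1) * z ^ (d + 1) := by
  rw [hs.tsum_eq_zero_add, ← tsum_mul_left]
  simp only [zero_add, pow_one]
  congr 1
  exact tsum_congr fun d => by ring

end PowerSeries

lemma deriv_ofReal_eq_zero_of_eventually_eq_zero {f : ℂ → ℂ} {x : ℝ}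
    (h : ∀ᶠ y : ℝ in 𝓝 x, f y = 0) : deriv f x = 0 := by
  by_cases hd : DifferentiableAt ℂ f x
  · exact hd.hasDerivAt.comp_ofReal.unique ((hasDerivAt_const x 0).congr_of_eventuallyEq h)
  · exact deriv_zero_of_not_differentiableAt hd

lemma not_continuousAt_log_ofReal {x : ℝ} (hx : x < 0) : ¬ ContinuousAt log x := by
  intro hc
  have : (𝓝[{w : ℂ | w.im < 0}] (x : ℂ)).NeBot := by
    rw [← mem_closure_iff_nhdsWithin_neBot, closure_setOfPred_im_lt]
    simp
  have h := tendsto_nhds_unique hc.continuousWithinAt.tendsto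
    (tendsto_log_nhdsWithin_im_neg_of_re_neg_of_im_zero (by simpa using hx) (ofReal_im x))
  have harg := congrArg im h
  simp [log_im, arg_ofReal_of_neg hx] at harg
  linarith [Real.pi_pos]

lemma exists_ofReal_neg_of_notMem_slitPlane {z : ℂ} (hz : z ∉ slitPlane) (hz0 : z ≠ 0) :
    ∃ x : ℝ, x < 0 ∧ (x : ℂ) = z := by
  rw [mem_slitPlane_iff, not_or, not_lt, not_not] at hz
  refine ⟨z.re, hz.1.lt_of_ne fun h => hz0 (ext h hz.2), ext rfl (by simp [hz.2])⟩

lemma Nat.factorial_three_mul_le (n : ℕ) : (3 * n)! ≤ 27 ^ n * n ! ^ 3 := by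
  induction n with
  | zero => simp
  | succ n ih =>
    have hstep : (3 * (n + 1))! = (3 * n + 1) * (3 * n + 2) * (3 * n + 3) * (3 * n)! := by
      rw [show 3 * (n + 1) = 3 * n + 2 + 1 by ring, Nat.factorial_succ, Nat.factorial_succ,
        Nat.factorial_succ]
      ring
    calc (3 * (n + 1))! = (3 * n + 1) * (3 * n + 2) * (3 * n + 3) * (3 * n)! := hstep
      _ ≤ 27 * (n + 1) ^ 3 * (27 ^ n * n ! ^ 3) := Nat.mul_le_mul (by nlinarith) ih
      _ = 27 ^ (n + 1) * (n + 1)! ^ 3 := by rw [Nat.factorial_succ]; ring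

namespace PicardFuchs

noncomputable def theta (f : ℂ → ℂ) (Q : ℂ) : ℂ := Q * deriv f Q

lemma theta_const_add (c : ℂ) (f : ℂ → ℂ) : theta (fun Q => c + f Q) = theta f := by
  funext Q; simp only [theta, deriv_const_add']

lemma eventuallyEq_theta {f g : ℂ → ℂ} {z : ℂ} (h : f =ᶠ[𝓝 z] g) :
    theta f =ᶠ[𝓝 z] theta g := by
  filter_upwards [h.deriv] with Q hQ
  simp only [theta, hQ]

lemma theta_ofReal_eq_zero {f : ℂ → ℂ} {V : Set ℝ} (hV : IsOpen V) (hf : ∀ y ∈ V, f y = 0)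
    {x : ℝ} (hx : x ∈ V) : theta f x = 0 := by
  rw [theta, deriv_ofReal_eq_zero_of_eventually_eq_zero (eventually_of_mem (hV.mem_nhds hx) hf),
    mul_zero]

noncomputable def coeff (d : ℕ) : ℂ :=
  ((3 * (d + 1))! : ℂ) / ((d + 1) * ((d + 1)! : ℂ) ^ 3)

lemma norm_coeff_le (d : ℕ) : ‖coeff d‖ ≤ 27 ^ (d + 1) := by
  have hcast : coeff d = ((3 * (d + 1))! : ℂ) / (((d + 1) * (d + 1)! ^ 3 : ℕ) : ℂ) := by
    simp [coeff]
  rw [hcast, norm_div, norm_natCast, norm_natCast, div_le_iff₀ (by positivity)]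
  calc ((3 * (d + 1))! : ℝ) ≤ 27 ^ (d + 1) * ((d + 1)! : ℝ) ^ 3 := by
        exact_mod_cast Nat.factorial_three_mul_le (d + 1)
    _ ≤ 27 ^ (d + 1) * (((d + 1) * (d + 1)! ^ 3 : ℕ) : ℝ) := by
        push_cast
        gcongr
        exact le_mul_of_one_le_left (by positivity) (by simp)

lemma coeff_zero : coeff 0 = 6 := by
  norm_num [coeff, Nat.factorial]

lemma coeff_succ (d : ℕ) :
    ((d : ℂ) + 2) ^ 3 * coeff (d + 1) = 3 * (d + 1) * (3 * d + 4) * (3 * d + 5) * coeff d := by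
  have hfac : (3 * (d + 1 + 1))! = (3 * d + 4) * (3 * d + 5) * (3 * d + 6) * (3 * (d + 1))! := by
    rw [show 3 * (d + 1 + 1) = 3 * (d + 1) + 2 + 1 by ring, Nat.factorial_succ, Nat.factorial_succ,
      Nat.factorial_succ]
    ring
  have hne : ((d + 1)! : ℂ) ≠ 0 := Nat.cast_ne_zero.2 (Nat.factorial_ne_zero _)
  have hd2 : (d : ℂ) + 1 + 1 ≠ 0 := by norm_cast
  simp only [coeff]
  rw [hfac, Nat.factorial_succ (d + 1)]
  push_cast
  field_simp
  ring

noncomputable def series (k : ℕ) (Q : ℂ) : ℂ :=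
  ∑' d : ℕ, ((d : ℂ) + 1) ^ k * coeff d * Q ^ (d + 1)

section Series

variable {z : ℂ}

lemma norm_succ_pow_mul_coeff_le (k d : ℕ) :
    ‖((d : ℂ) + 1) ^ k * coeff d‖ * (1 / 27) ^ d ≤ 27 * ((d : ℝ) + 1) ^ k := by
  have hd : ‖(d : ℂ) + 1‖ = (d : ℝ) + 1 := by norm_cast
  rw [norm_mul, norm_pow, hd, mul_assoc, mul_comm 27]
  gcongr
  calc ‖coeff d‖ * (1 / 27) ^ d ≤ 27 ^ (d + 1) * (1 / 27) ^ d := by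
        gcongr; exact norm_coeff_le d
    _ = 27 := by rw [pow_succ, mul_comm, ← mul_assoc, ← mul_pow]; norm_num

lemma hasDerivAt_series (k : ℕ) (hz : ‖z‖ < 1 / 27) :
    HasDerivAt (series k) (∑' d : ℕ, ((d : ℂ) + 1) * (((d : ℂ) + 1) ^ k * coeff d) * z ^ d) z :=
  hasDerivAt_tsum_mul_pow_succ (norm_succ_pow_mul_coeff_le k) hz

lemma theta_series (k : ℕ) (hz : ‖z‖ < 1 / 27) : theta (series k) z = series (k + 1) z :=
  (mul_deriv_tsum_mul_pow_succ (norm_succ_pow_mul_coeff_le k) hz).trans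
    (tsum_congr fun d => by ring)

lemma theta_series_eventuallyEq (k : ℕ) (hz : ‖z‖ < 1 / 27) :
    theta (series k) =ᶠ[𝓝 z] series (k + 1) :=
  eventually_of_mem (Metric.isOpen_ball.mem_nhds (mem_ball_zero_iff.2 hz)) fun _ hw =>
    theta_series k (mem_ball_zero_iff.1 hw)

lemma series_three_eq (hz : ‖z‖ < 1 / 27) :
    series 3 z = 6 * z + 27 * z * series 3 z + 27 * z * series 2 z + 6 * z * series 1 z := by
  have hs (k : ℕ) := summable_mul_pow_succ (norm_succ_pow_mul_coeff_le k) hz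
  have hshift : ∑' d : ℕ, (((d + 1 : ℕ) : ℂ) + 1) ^ 3 * coeff (d + 1) * z ^ (d + 1) =
      27 * series 3 z + 27 * series 2 z + 6 * series 1 z := by
    simp only [series]
    rw [← tsum_mul_left, ← tsum_mul_left, ← tsum_mul_left,
      ← ((hs 3).mul_left 27).tsum_add ((hs 2).mul_left 27),
      ← (((hs 3).mul_left 27).add ((hs 2).mul_left 27)).tsum_add ((hs 1).mul_left 6)]
    refine tsum_congr fun d => ?_
    have h := coeff_succ d
    push_cast
    linear_combination z ^ (d + 1) * h
  have h : series 3 z = _ := tsum_mul_pow_succ_eq (hs 3)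
  rw [coeff_zero] at h
  push_cast at h hshift
  linear_combination h + z * hshift

end Series

noncomputable def iFunction (Q : ℂ) : ℂ := log Q + series 0 Q

lemma theta_iFunction_eventuallyEq {z : ℂ} (hz : z ∈ slitPlane) (hz27 : ‖z‖ < 1 / 27) :
    theta iFunction =ᶠ[𝓝 z] fun Q => 1 + series 1 Q := by
  have hU : slitPlane ∩ Metric.ball 0 (1 / 27) ∈ 𝓝 z :=
    (isOpen_slitPlane.inter Metric.isOpen_ball).mem_nhds ⟨hz, mem_ball_zero_iff.2 hz27⟩
  filter_upwards [hU] with w ⟨hw, hw27⟩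
  rw [mem_ball_zero_iff] at hw27
  have hs := hasDerivAt_series 0 hw27
  have hI : HasDerivAt iFunction _ w := (hasDerivAt_log hw).fun_add hs
  rw [theta, hI.deriv, mul_add, mul_inv_cancel₀ (slitPlane_ne_zero hw), ← hs.deriv]
  exact congrArg (1 + ·) (theta_series 0 hw27)

lemma theta_iFunction_ofReal {x : ℝ} (hx : x < 0) (hx27 : |x| < 1 / 27) :
    theta iFunction x = 0 := by
  rw [theta, deriv_zero_of_not_differentiableAt, mul_zero]
  intro hd
  have hs := (hasDerivAt_series 0 (z := x) (by simpa using hx27)).differentiableAt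
  refine not_continuousAt_log_ofReal hx ?_
  convert (hd.sub hs).continuousAt using 1
  funext Q
  simp [iFunction]

/-- `θ³ - 3Q θ(3θ+1)(3θ+2)`, with `θ(3θ+1)(3θ+2) = 9θ³ + 9θ² + 2θ` expanded. -/
noncomputable def picardFuchsOp (f : ℂ → ℂ) (Q : ℂ) : ℂ :=
  theta (theta (theta f)) Q -
    3 * Q * (9 * theta (theta (theta f)) Q + 9 * theta (theta f) Q + 2 * theta f Q)

lemma picardFuchsOp_iFunction_of_mem_slitPlane {Q : ℂ} (hQ : Q ∈ slitPlane)
    (hQ27 : ‖Q‖ < 1 / 27) : picardFuchsOp iFunction Q = 0 := by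
  have h1 := theta_iFunction_eventuallyEq hQ hQ27
  have h2 : theta (theta iFunction) =ᶠ[𝓝 Q] series 2 :=
    (eventuallyEq_theta h1).trans <| by
      rw [theta_const_add]; exact theta_series_eventuallyEq 1 hQ27
  have h3 := (eventuallyEq_theta h2).trans (theta_series_eventuallyEq 2 hQ27)
  rw [picardFuchsOp, h1.eq_of_nhds, h2.eq_of_nhds, h3.eq_of_nhds]
  linear_combination series_three_eq hQ27

lemma picardFuchsOp_iFunction_ofReal {x : ℝ} (hx : x < 0) (hx27 : |x| < 1 / 27) :
    picardFuchsOp iFunction x = 0 := by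
  set V : Set ℝ := {y | y < 0 ∧ |y| < 1 / 27}
  have hV : IsOpen V := isOpen_Iio.inter (isOpen_Iio.preimage continuous_abs)
  have h1 : ∀ y ∈ V, theta iFunction y = 0 := fun y hy => theta_iFunction_ofReal hy.1 hy.2
  have h2 : ∀ y ∈ V, theta (theta iFunction) y = 0 := fun y hy => theta_ofReal_eq_zero hV h1 hy
  rw [picardFuchsOp, h1 x ⟨hx, hx27⟩, h2 x ⟨hx, hx27⟩, theta_ofReal_eq_zero hV h2 ⟨hx, hx27⟩]
  ring

end PicardFuchs

open PicardFuchs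

/-- `I(Q) = log Q + ∑_{d≥1} Q^d (3d)!/(d(d!)^3)` satisfies the Picard–Fuchs equation
`(θ³ - 3Q·θ(3θ+1)(3θ+2)) I = 0` with `θ = Q d/dQ`, on `0 < |Q| < 1/27`.
Here `θ(3θ+1)(3θ+2) = 9θ³ + 9θ² + 2θ`. -/
theorem stmt_1 :
    let I : ℂ → ℂ := fun Q => Complex.log Q +
      ∑' d : ℕ, (((3 * (d + 1)).factorial : ℂ) / ((d + 1) * ((d + 1).factorial : ℂ) ^ 3)) * Q ^ (d + 1)
    let θ : (ℂ → ℂ) → (ℂ → ℂ) := fun f Q => Q * deriv f Q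
    ∀ Q : ℂ, 0 < ‖Q‖ → ‖Q‖ < 1 / 27 →
      θ (θ (θ I)) Q - 3 * Q * (9 * θ (θ (θ I)) Q + 9 * θ (θ I) Q + 2 * θ I Q) = 0 := by
  intro I θ Q hQ0 hQ27
  have hI : I = iFunction := by
    funext Q; simp [I, iFunction, series, coeff]
  change picardFuchsOp I Q = 0
  rw [hI]
  by_cases hQ : Q ∈ slitPlane
  · exact picardFuchsOp_iFunction_of_mem_slitPlane hQ hQ27
  · obtain ⟨x, hx, rfl⟩ := exists_ofReal_neg_of_notMem_slitPlane hQ (norm_pos_iff.1 hQ0)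
    exact picardFuchsOp_iFunction_ofReal hx (by simpa using hQ27)
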